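/- arXiv:math-ph/0603048 — 2 statements merged into one kernel-verified Lean document; each statement's English description precedes it below -/
import Mathlib

section
/- If a Kraus operator K_A(ρ) = Σᵢ Aᵢ ρ Aᵢ† on n×n complex matrices admits an inverse that is also a Kraus operator, i.e. there exist B₁,…,Bₘ with Σᵢⱼ (AᵢBⱼ) ρ (AᵢBⱼ)† = ρ for all ρ, then there exists an invertible matrix A ∈ GL(n,ℂ) such that K_A(ρ) = A ρ A† for all ρ. -/
/-!
Evaluating `∑ₗ Kₗ ρ Kₗᴴ = ρ` (with `Kₗ = AᵢBⱼ`) at the matrix units `E_pq` gives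
`∑ₗ (Kₗ)_rp conj (Kₗ)_sq = δ_pr δ_qs`. Hence off-diagonal entries of every `Kₗ` vanish, and the
vectors `((Kₗ)_pp)ₗ` are unit vectors with pairwise inner product `1`, so they coincide: every
`AᵢBⱼ` is a scalar `cᵢⱼ • 1`. Some `cᵢ₀ⱼ₀ ≠ 0`, so `Aᵢ₀` and `Bⱼ₀` are invertible and cancelling
`Bⱼ₀` gives `Aᵢ = dᵢ • Aᵢ₀`. Then `K_A ρ = C ρ Cᴴ` with `C = √(∑ |dᵢ|²) • Aᵢ₀`.
-/

open Matrix

open scoped ComplexOrder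

namespace Matrix

theorem exists_eq_smul_one_of_apply {n R : Type*} [DecidableEq n] [Semiring R]
    {M : Matrix n n R} (hoff : ∀ r s, r ≠ s → M r s = 0) (hdiag : ∀ r s, M r r = M s s) :
    ∃ c : R, M = c • 1 := by
  rcases isEmpty_or_nonempty n with _ | ⟨⟨p⟩⟩
  · exact ⟨0, Subsingleton.elim _ _⟩
  refine ⟨M p p, ext fun r s => ?_⟩
  obtain rfl | hrs := eq_or_ne r s
  · simp [hdiag r p]
  · simp [hoff r s hrs, hrs]

theorem isUnit_and_isUnit_of_mul_eq_smul_one {n K : Type*} [Fintype n] [DecidableEq n] [Field K]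
    {M N : Matrix n n K} {c : K} (h : M * N = c • 1) (hc : c ≠ 0) : IsUnit M ∧ IsUnit N := by
  have hinv : M * (c⁻¹ • N) = 1 := by
    rw [mul_smul_comm, h, smul_smul, inv_mul_cancel₀ hc, one_smul]
  exact ⟨IsUnit.of_mul_eq_one _ hinv,
    IsUnit.of_mul_eq_one (c⁻¹ • M) (by rw [mul_eq_one_comm, smul_mul_assoc, ← mul_smul_comm, hinv])⟩

variable {𝕜 ι n : Type*} [RCLike 𝕜] [Fintype ι] [Fintype n] [DecidableEq n]

theorem sum_mul_single_one_mul_conjTranspose_apply (K : ι → Matrix n n 𝕜) (p q r s : n) :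
    (∑ l, K l * single p q (1 : 𝕜) * (K l)ᴴ : Matrix n n 𝕜) r s =
      (fun l => K l r p) ⬝ᵥ star fun l => K l s q := by
  simp [sum_apply, mul_apply, single_apply, dotProduct, ite_and]

theorem exists_eq_smul_one_of_sum_mul_mul_conjTranspose_eq_self (K : ι → Matrix n n 𝕜)
    (h : ∀ ρ, ∑ l, K l * ρ * (K l)ᴴ = ρ) (l : ι) : ∃ c : 𝕜, K l = c • 1 := by
  have hK (p q r s : n) : ((fun l => K l r p) ⬝ᵥ star fun l => K l s q) =
      if p = r ∧ q = s then 1 else 0 := by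
    rw [← sum_mul_single_one_mul_conjTranspose_apply, h, single_apply]
  refine exists_eq_smul_one_of_apply (fun r s hrs => ?_) (fun r s => ?_)
  · have : (fun l => K l r s) = 0 :=
      dotProduct_self_star_eq_zero.mp <| by simpa [hrs.symm] using hK s s r r
    exact congrFun this l
  · have : ((fun l => K l r r) - fun l => K l s s) = 0 := dotProduct_self_star_eq_zero.mp <| by
      simp only [star_sub, dotProduct_sub, sub_dotProduct, hK]
      simp
    exact sub_eq_zero.mp (congrFun this l)

theorem sum_smul_mul_mul_conjTranspose_smul (M ρ : Matrix n n 𝕜) (d : ι → 𝕜) :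
    ∑ i, (d i • M) * ρ * (d i • M)ᴴ =
      (((√(∑ i, ‖d i‖ ^ 2) : ℝ) : 𝕜) • M) * ρ * (((√(∑ i, ‖d i‖ ^ 2) : ℝ) : 𝕜) • M)ᴴ := by
  simp only [conjTranspose_smul, smul_mul_assoc, mul_smul_comm, smul_smul, ← Finset.sum_smul,
    RCLike.star_def, RCLike.conj_ofReal, RCLike.conj_mul, ← RCLike.ofReal_mul,
    Real.mul_self_sqrt (Finset.sum_nonneg fun i _ => sq_nonneg ‖d i‖)]
  push_cast
  rfl

end Matrix

/-- If a Kraus operator K_A(ρ) = Σᵢ Aᵢ ρ Aᵢᴴ admits an inverse which is again a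
Kraus operator K_B, i.e. Σᵢⱼ (AᵢBⱼ) ρ (AᵢBⱼ)ᴴ = ρ for all ρ, then K_A is given
by a single invertible matrix: K_A(ρ) = C ρ Cᴴ with C ∈ GL(n,ℂ). -/
theorem kraus_invertible_is_GL {n : Type*} [Fintype n] [DecidableEq n] {k m : ℕ}
    (A : Fin k → Matrix n n ℂ) (B : Fin m → Matrix n n ℂ)
    (h : ∀ ρ : Matrix n n ℂ, ∑ i, ∑ j, (A i * B j) * ρ * (A i * B j)ᴴ = ρ) :
    ∃ C : Matrix n n ℂ, IsUnit C ∧ ∀ ρ : Matrix n n ℂ,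
      ∑ i, A i * ρ * (A i)ᴴ = C * ρ * Cᴴ := by
  rcases isEmpty_or_nonempty n with _ | _
  · exact ⟨1, isUnit_one, fun ρ => Subsingleton.elim _ _⟩
  have hAB (ρ : Matrix n n ℂ) : ∑ x : Fin k × Fin m, (A x.1 * B x.2) * ρ * (A x.1 * B x.2)ᴴ = ρ :=
    (Fintype.sum_prod_type' (fun i j => (A i * B j) * ρ * (A i * B j)ᴴ)).trans (h ρ)
  choose c hc using exists_eq_smul_one_of_sum_mul_mul_conjTranspose_eq_self _ hAB
  obtain ⟨⟨i₀, j₀⟩, -, hne⟩ := Finset.exists_ne_zero_of_sum_ne_zero ((hAB 1).trans_ne one_ne_zero)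
  have hc₀ : c (i₀, j₀) ≠ 0 := by
    rintro h₀
    simp [hc (i₀, j₀), h₀] at hne
  obtain ⟨hA₀, hB₀⟩ := isUnit_and_isUnit_of_mul_eq_smul_one (hc (i₀, j₀)) hc₀
  set d : Fin k → ℂ := fun i => c (i, j₀) / c (i₀, j₀)
  have hA (i : Fin k) : A i = d i • A i₀ := by
    rw [← hB₀.mul_left_inj, smul_mul_assoc, hc (i, j₀), hc (i₀, j₀), smul_smul,
      div_mul_cancel₀ _ hc₀]
  have hd : 0 < ∑ i, ‖d i‖ ^ 2 :=
    Finset.sum_pos' (fun i _ => by positivity) ⟨i₀, Finset.mem_univ _, by simp [d, hc₀]⟩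
  refine ⟨(√(∑ i, ‖d i‖ ^ 2) : ℂ) • A i₀, ?_, fun ρ => ?_⟩
  · exact hA₀.smul (Units.mk0 _ (Complex.ofReal_ne_zero.mpr (Real.sqrt_ne_zero'.mpr hd)))
  · calc ∑ i, A i * ρ * (A i)ᴴ = ∑ i, (d i • A i₀) * ρ * (d i • A i₀)ᴴ := by simp only [← hA]
      _ = _ := sum_smul_mul_mul_conjTranspose_smul (A i₀) ρ d
end

section
/- If Σᵢ Cᵢ ρ Cᵢ† = ρ for all n×n complex matrices ρ, where C₁,…,C_m are n×n complex matrices, then each Cᵢ is a scalar multiple of the identity, Cᵢ = αᵢ·I, and Σᵢ |αᵢ|² = 1. -/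
/-!
Testing the channel on the matrix units `single a b 1` shows that the vectors
`v p a := (C i p a)ᵢ` satisfy `⟪v q b, v p a⟫ = δ_{pa} δ_{qb}`. Hence the off-diagonal vectors
have norm zero, while the diagonal ones are unit vectors with pairwise inner product one,
so they all coincide.
-/

open Matrix

section DotProduct

variable {n R : Type*} [Fintype n] [PartialOrder R] [NonUnitalRing R] [StarRing R]
  [StarOrderedRing R] [NoZeroDivisors R]

theorem Matrix.eq_of_star_dotProduct_eq {u w : n → R} (hu : star u ⬝ᵥ u = star u ⬝ᵥ w)
    (hw : star w ⬝ᵥ w = star w ⬝ᵥ u) : u = w := by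
  have hsq : star (u - w) ⬝ᵥ (u - w) = 0 := by
    simp only [star_sub, sub_dotProduct, dotProduct_sub, hu, hw, sub_self]
  exact sub_eq_zero.mp (dotProduct_star_self_eq_zero.mp hsq)

end DotProduct

section Kraus

variable {ι n R : Type*} [Fintype ι] [Fintype n] [DecidableEq n] [CommRing R] [StarRing R]

theorem Matrix.sum_mul_single_mul_conjTranspose_apply (C : ι → Matrix n n R) (a b p q : n) :
    (∑ i, C i * single a b 1 * (C i)ᴴ : Matrix n n R) p q =
      star (fun i ↦ C i q b) ⬝ᵥ fun i ↦ C i p a := by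
  simp [sum_apply, mul_apply, single_apply, ite_and, dotProduct, mul_comm]

variable {C : ι → Matrix n n R} (h : ∀ ρ : Matrix n n R, ∑ i, C i * ρ * (C i)ᴴ = ρ)
include h

theorem star_dotProduct_entries_of_sum_conj_eq_self (a b p q : n) :
    (star (fun i ↦ C i q b) ⬝ᵥ fun i ↦ C i p a) = if a = p ∧ b = q then 1 else 0 := by
  rw [← sum_mul_single_mul_conjTranspose_apply, h, single_apply]

variable [PartialOrder R] [StarOrderedRing R] [NoZeroDivisors R]

theorem apply_eq_zero_of_sum_conj_eq_self {p q : n} (hpq : p ≠ q) (i : ι) : C i p q = 0 := by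
  have hzero := star_dotProduct_entries_of_sum_conj_eq_self h q q p p
  rw [if_neg (fun hqp ↦ hpq hqp.1.symm), dotProduct_star_self_eq_zero] at hzero
  exact congrFun hzero i

theorem apply_self_eq_of_sum_conj_eq_self (p c : n) (i : ι) : C i p p = C i c c := by
  have hentries := star_dotProduct_entries_of_sum_conj_eq_self h
  refine congrFun
    (eq_of_star_dotProduct_eq (u := fun j ↦ C j p p) (w := fun j ↦ C j c c) ?_ ?_) i
  <;> rw [hentries, hentries, if_pos ⟨rfl, rfl⟩, if_pos ⟨rfl, rfl⟩]

theorem eq_smul_one_of_sum_conj_eq_self (c : n) (i : ι) :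
    C i = C i c c • (1 : Matrix n n R) := by
  ext p q
  rcases eq_or_ne p q with rfl | hpq
  · simp [apply_self_eq_of_sum_conj_eq_self h p c i]
  · simp [apply_eq_zero_of_sum_conj_eq_self h hpq i, hpq]

end Kraus

/-- If Σᵢ Cᵢ ρ Cᵢᴴ = ρ for all n×n complex matrices ρ, then each Cᵢ is a scalar
multiple of the identity, Cᵢ = αᵢ·I, with Σᵢ |αᵢ|² = 1. -/
theorem kraus_identity_scalars {n : Type*} [Fintype n] [DecidableEq n] [Nonempty n]
    {m : ℕ} (C : Fin m → Matrix n n ℂ)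
    (h : ∀ ρ : Matrix n n ℂ, ∑ i, C i * ρ * (C i)ᴴ = ρ) :
    ∃ α : Fin m → ℂ, (∀ i, C i = α i • (1 : Matrix n n ℂ)) ∧
      ∑ i, Complex.normSq (α i) = 1 := by
  obtain ⟨c⟩ := ‹Nonempty n›
  refine ⟨fun i ↦ C i c c, ?_, ?_⟩
  · open scoped ComplexOrder in exact eq_smul_one_of_sum_conj_eq_self h c
  · have hnorm := star_dotProduct_entries_of_sum_conj_eq_self h c c c c
    rw [if_pos ⟨rfl, rfl⟩] at hnorm
    have hnormSq : ((∑ i, Complex.normSq (C i c c) : ℝ) : ℂ) = 1 := by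
      push_cast [Complex.normSq_eq_conj_mul_self]
      simpa [dotProduct] using hnorm
    exact_mod_cast hnormSq
end
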